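/- Let F = a₁A₁ + ⋯ + a_rA_r be a singular fiber of a ℙ¹-fibration f : X → C on a smooth projective surface, and suppose aᵢ = 1 for some i (F has a reduced component). Then F contains a (−1)-curve A_j with j ≠ i. -/
import Mathlib


open Finset

/-- If a singular fiber `F = a₁A₁ + ⋯ + a_rA_r` of a ℙ¹-fibration has a reduced component
`Aᵢ` (i.e. `aᵢ = 1`), then `F` contains a (−1)-curve `A_j` with `j ≠ i` (numerical form;
a singular fiber with a reduced component is reducible).  Notation as in the numerical
encoding of fibers: `Q i j = Aᵢ · Aⱼ`, `g` the genera, `KA i = K_X · Aᵢ`, with the standard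
fiber relations. -/
theorem singular_fiber_reduced_component_gives_other_minus_one_curve
    (ι : Type*) [Fintype ι] [DecidableEq ι]
    (a : ι → ℕ) (Q : ι → ι → ℤ) (g : ι → ℕ) (KA : ι → ℤ)
    (ha : ∀ i, 0 < a i)
    (hsymm : ∀ i j, Q i j = Q j i)
    (hoff : ∀ i j, i ≠ j → 0 ≤ Q i j)
    (hconn : ∀ S : Finset ι, S.Nonempty → S ≠ univ → ∃ i ∈ S, ∃ j ∈ Sᶜ, 0 < Q i j)
    (hfiber : ∀ i, ∑ j, (a j : ℤ) * Q i j = 0)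
    (hadj : ∀ i, 2 * (g i : ℤ) - 2 = Q i i + KA i)
    (hKF : ∑ i, (a i : ℤ) * KA i = -2)
    (hsingular : 1 < Fintype.card ι)
    (i : ι) (hi : a i = 1) :
    ∃ j, j ≠ i ∧ g j = 0 ∧ Q j j = -1 := by
  -- Step 1: every component has negative self-intersection, i.e. `Q j j ≤ -1`.
  have hQneg : ∀ j, Q j j ≤ -1 := by
    intro j
    have hSne : ({j} : Finset ι) ≠ univ := by
      intro hEq
      have := congrArg Finset.card hEq
      simp [Finset.card_univ] at this
      omega
    obtain ⟨i', hi', k, hk, hQpos⟩ := hconn {j} (singleton_nonempty j) hSne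
    have hi'j : i' = j := by simpa using hi'
    rw [hi'j] at hQpos
    have hkj : k ≠ j := by simpa using hk
    have hsum := hfiber j
    rw [← Finset.sum_erase_add _ _ (mem_univ j)] at hsum
    have hpos : 0 < ∑ x ∈ univ.erase j, (a x : ℤ) * Q j x := by
      apply Finset.sum_pos'
      · intro x hx
        have hxj : x ≠ j := (Finset.mem_erase.mp hx).1
        exact mul_nonneg (by positivity) (hoff j x (Ne.symm hxj))
      · exact ⟨k, Finset.mem_erase.mpr ⟨hkj, mem_univ k⟩,
          mul_pos (by exact_mod_cast ha k) hQpos⟩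
    have hneg : (a j : ℤ) * Q j j < 0 := by omega
    have haj : (0 : ℤ) < a j := by exact_mod_cast ha j
    nlinarith [haj, hneg]
  -- Step 2: `KA j ≥ -1` for all j.
  have hKA : ∀ j, -1 ≤ KA j := by
    intro j
    have h1 := hadj j
    have h2 := hQneg j
    omega
  -- Step 3: contradiction argument.
  by_contra hcon
  push_neg at hcon
  have hKA0 : ∀ j, j ≠ i → 0 ≤ KA j := by
    intro j hj
    by_contra h
    push_neg at h
    have hKAj : KA j = -1 := by have := hKA j; omega
    have h1 := hadj j
    have h2 := hQneg j
    have hg : g j = 0 := by omega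
    have hQ : Q j j = -1 := by omega
    exact hcon j hj hg hQ
  have hsum := hKF
  rw [← Finset.sum_erase_add _ _ (mem_univ i)] at hsum
  have hnn : 0 ≤ ∑ x ∈ univ.erase i, (a x : ℤ) * KA x := by
    apply Finset.sum_nonneg
    intro x hx
    exact mul_nonneg (by positivity) (hKA0 x (Finset.mem_erase.mp hx).1)
  have hi' : (a i : ℤ) = 1 := by exact_mod_cast hi
  have := hKA i
  rw [hi', one_mul] at hsum
  omega
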